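/- Let D ⊆ ℝ be nonempty with finite supremum s_D, and let ν be a Borel probability measure supported on D with finite mean μ and CDF F. Let Z = (Z_1,…,Z_n) be i.i.d. with law ν, and let U = (U_1,…,U_n) be i.i.d. Uniform(0,1). Then for any function T : ℝⁿ → ℝ and any x ∈ Dⁿ: P(T(Z) ≤ T(x)) ≤ P(b_{D,T}(x,U) ≥ μ). -/

import Mathlib

open MeasureTheory Set

/-- The sorted rearrangement (order statistics) of a finite real vector:
`sortedVec x i` is the (i+1)-st order statistic `x_{(i+1)}` (0-indexed). -/
noncomputable def sortedVec {n : ℕ} (x : Fin n → ℝ) : Fin n → ℝ :=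
  x ∘ ⇑(Tuple.sort x)

/-- The induced mean `m(x, ℓ) = s - ∑ ℓ_{(i)} (x_{(i+1)} - x_{(i)})`, with `x_{(n+1)} := s`. -/
noncomputable def inducedMean {n : ℕ} (s : ℝ) (x ℓ : Fin n → ℝ) : ℝ :=
  s - ∑ i : Fin n, sortedVec ℓ i * ((Fin.snoc (sortedVec x) s : Fin (n+1) → ℝ) i.succ - sortedVec x i)

/-- `S_{D,T}(x) = {y ∈ Dⁿ : T y ≤ T x}`. -/
def SsetD {n : ℕ} (D : Set ℝ) (T : (Fin n → ℝ) → ℝ) (x : Fin n → ℝ) : Set (Fin n → ℝ) :=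
  {y | (∀ i, y i ∈ D) ∧ T y ≤ T x}

/-- `b_{D,T}(x, u) = sup_{z ∈ S_{D,T}(x)} m_{sup D}(z, u)`. -/
noncomputable def bfun {n : ℕ} (D : Set ℝ) (T : (Fin n → ℝ) → ℝ) (x u : Fin n → ℝ) : ℝ :=
  sSup ((fun z => inducedMean (sSup D) z u) '' SsetD D T x)

/-- The uniform probability measure on `[0,1]`. -/
noncomputable def unif01 : Measure ℝ := volume.restrict (Icc (0:ℝ) 1)

/-- The law of an i.i.d. sample of size `n` from Uniform(0,1). -/
noncomputable def unifPi (n : ℕ) : Measure (Fin n → ℝ) := Measure.pi fun _ => unif01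

/-- The `p`-quantile of the random variable `Y` under `μ`:
`Q(p, Y) = inf {y : P(Y ≤ y) ≥ p}`. -/
noncomputable def rquantile {Ω : Type*} [MeasurableSpace Ω] (μ : Measure Ω)
    (Y : Ω → ℝ) (p : ℝ) : ℝ :=
  sInf {y : ℝ | ENNReal.ofReal p ≤ μ {ω | Y ω ≤ y}}

/-- The upper confidence bound `b^α_{D,T}(x) = Q(1 - α, b_{D,T}(x, U))`, `U` i.i.d. Uniform(0,1). -/
noncomputable def ucb {n : ℕ} (D : Set ℝ) (T : (Fin n → ℝ) → ℝ) (α : ℝ)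
    (x : Fin n → ℝ) : ℝ :=
  rquantile (unifPi n) (bfun D T x) (1 - α)

/-- The stairstep function `G_{x,ℓ}` with top value at `s`. -/
noncomputable def stairstep {n : ℕ} (s : ℝ) (x ℓ : Fin n → ℝ) (t : ℝ) : ℝ :=
  if s ≤ t then 1 else sSup ({0} ∪ (sortedVec ℓ '' {i | sortedVec x i ≤ t}))

/-- The `k`-th smallest value (1-indexed) among `m 0, …, m (L-1)`. -/
noncomputable def kthSmallest {L : ℕ} (m : Fin L → ℝ) (k : ℕ) : ℝ :=
  sInf {y : ℝ | k ≤ Nat.card {j : Fin L // m j ≤ y}}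

/-! If `Q` is the quantile function of `ν`, then `Z = Q(U)` (coordinatewise) has law `ν`ⁿ, so
it suffices to show that `T(Q(U)) ≤ T(x)` forces `b_{D,T}(x, U) ≥ μ` almost surely.
For `z ∈ Dⁿ` and `s = sup D`, the function `s - t` dominates, for `t ≤ s`, the telescoping
sum `∑ᵢ 1{t ≤ z₍ᵢ₎} (z₍ᵢ₊₁₎ - z₍ᵢ₎)`; integrating against `ν` gives `μ ≤ m_D(z, F(z))`, hence
`μ ≤ b_{D,T}(x, F(z))` when `T z ≤ T x`. Finally `F(Q(u)) ≥ u` and `b_{D,T}(x, ·)` is antitone. -/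

open ProbabilityTheory

section Sorting

variable {n : ℕ}

lemma sortedVec_comp_of_monotone {f : ℝ → ℝ} (hf : Monotone f) (x : Fin n → ℝ) :
    sortedVec (f ∘ x) = f ∘ sortedVec x := by
  simpa [sortedVec, Function.comp_assoc] using
    Tuple.unique_monotone (Tuple.monotone_sort (f ∘ x)) (hf.comp (Tuple.monotone_sort x))

lemma sortedVec_mono {u v : Fin n → ℝ} (h : u ≤ v) : sortedVec u ≤ sortedVec v := by
  intro i
  set σ := Tuple.sort u
  set τ := Tuple.sort v
  -- pigeonhole: `n - i` positions at or above `i`, `i + 1` positions at or below `i`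
  obtain ⟨j, hj⟩ : ((Finset.Ici i).map σ.toEmbedding ∩
      (Finset.Iic i).map τ.toEmbedding).Nonempty := by
    apply Finset.inter_nonempty_of_card_lt_card_add_card (Finset.subset_univ _)
      (Finset.subset_univ _)
    simp only [Finset.card_univ, Fintype.card_fin, Finset.card_map, Fin.card_Ici, Fin.card_Iic]
    omega
  rw [Finset.mem_inter, Finset.mem_map_equiv, Finset.mem_map_equiv, Finset.mem_Ici,
    Finset.mem_Iic] at hj
  obtain ⟨hjσ, hjτ⟩ := hj
  calc sortedVec u i ≤ u (σ (σ.symm j)) := Tuple.monotone_sort u hjσ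
    _ = u j := by rw [Equiv.apply_symm_apply]
    _ ≤ v j := h j
    _ = v (τ (τ.symm j)) := by rw [Equiv.apply_symm_apply]
    _ ≤ sortedVec v i := Tuple.monotone_sort v hjτ

lemma sortedVec_add_const (v : Fin n → ℝ) (c : ℝ) :
    sortedVec (fun j => v j + c) = fun i => sortedVec v i + c :=
  sortedVec_comp_of_monotone (f := (· + c)) (fun _ _ h => by simpa using h) v

lemma lipschitzWith_sortedVec_apply (i : Fin n) :
    LipschitzWith 1 (fun u : Fin n → ℝ => sortedVec u i) := by
  have hle : ∀ u v : Fin n → ℝ, sortedVec u i ≤ sortedVec v i + dist u v := fun u v => by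
    have huv : u ≤ fun j => v j + dist u v := fun j => by
      linarith [(le_abs_self _).trans ((Real.dist_eq _ _).symm.trans_le (dist_le_pi_dist u v j))]
    simpa [sortedVec_add_const] using sortedVec_mono huv i
  refine LipschitzWith.of_dist_le_mul fun u v => ?_
  rw [NNReal.coe_one, one_mul, Real.dist_eq, abs_sub_le_iff]
  exact ⟨by linarith [hle u v], by linarith [hle v u, dist_comm u v]⟩

end Sorting

lemma Fin.sum_univ_succ_sub_castSucc {M : Type*} [AddCommGroup M] {n : ℕ} (g : Fin (n + 1) → M) :
    ∑ i : Fin n, (g i.succ - g i.castSucc) = g (Fin.last n) - g 0 := by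
  induction n with
  | zero => simp
  | succ n ih =>
    rw [Fin.sum_univ_castSucc]
    simp only [Fin.succ_castSucc]
    rw [ih (fun j => g j.castSucc)]
    simp

section InducedMean

variable {n : ℕ} {s : ℝ} {x : Fin n → ℝ}

noncomputable def orderGap (s : ℝ) (x : Fin n → ℝ) (i : Fin n) : ℝ :=
  (Fin.snoc (sortedVec x) s : Fin (n + 1) → ℝ) i.succ - sortedVec x i

lemma inducedMean_eq_sub_sum (ℓ : Fin n → ℝ) :
    inducedMean s x ℓ = s - ∑ i, sortedVec ℓ i * orderGap s x i :=
  rfl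

lemma orderGap_nonneg (hx : ∀ i, x i ≤ s) (i : Fin n) : 0 ≤ orderGap s x i := by
  rw [orderGap, sub_nonneg]
  simp only [Fin.snoc, Fin.val_succ]
  split_ifs with h
  · exact Tuple.monotone_sort x (Fin.mk_le_mk.mpr (Nat.le_succ _))
  · exact hx _

lemma inducedMean_le (hx : ∀ i, x i ≤ s) {ℓ : Fin n → ℝ} (hℓ : 0 ≤ ℓ) :
    inducedMean s x ℓ ≤ s := by
  rw [inducedMean_eq_sub_sum, sub_le_self_iff]
  exact Finset.sum_nonneg fun i _ => mul_nonneg (hℓ _) (orderGap_nonneg hx i)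

lemma inducedMean_antitone (hx : ∀ i, x i ≤ s) : Antitone (inducedMean s x) := by
  intro u v huv
  simp only [inducedMean_eq_sub_sum, sub_le_sub_iff_left]
  exact Finset.sum_le_sum fun i _ =>
    mul_le_mul_of_nonneg_right (sortedVec_mono huv i) (orderGap_nonneg hx i)

lemma continuous_inducedMean (s : ℝ) (x : Fin n → ℝ) : Continuous (inducedMean s x) :=
  continuous_const.sub <| continuous_finsetSum _ fun i _ =>
    (lipschitzWith_sortedVec_apply i).continuous.mul continuous_const

lemma sum_indicator_orderGap_le (hx : ∀ i, x i ≤ s) {t : ℝ} (ht : t ≤ s) :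
    ∑ i, (Iic (sortedVec x i)).indicator (fun _ => orderGap s x i) t ≤ s - t := by
  set w : Fin (n + 1) → ℝ := Fin.snoc (sortedVec x) s
  have hterm : ∀ i, (Iic (sortedVec x i)).indicator (fun _ => orderGap s x i) t
      ≤ max (w i.succ) t - max (w i.castSucc) t := fun i => by
    have hgap := orderGap_nonneg hx i
    simp only [orderGap] at hgap ⊢
    simp only [w, Fin.snoc_castSucc, Set.indicator_apply, mem_Iic]
    split_ifs with hti
    · rw [max_eq_left hti]; linarith [le_max_left (w i.succ) t]
    · rw [max_eq_right (not_le.mp hti).le]; linarith [le_max_right (w i.succ) t]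
  calc _ ≤ ∑ i : Fin n, (max (w i.succ) t - max (w i.castSucc) t) :=
        Finset.sum_le_sum fun i _ => hterm i
    _ = max s t - max (w 0) t := by
        rw [Fin.sum_univ_succ_sub_castSucc (fun j => max (w j) t)]
        simp [w]
    _ ≤ s - t := by rw [max_eq_left ht]; linarith [le_max_right (w 0) t]

lemma integral_le_inducedMean_cdf (ν : Measure ℝ) [IsProbabilityMeasure ν]
    (hint : Integrable id ν) (hνs : ∀ᵐ t ∂ν, t ≤ s) (hx : ∀ i, x i ≤ s) :
    ∫ t, t ∂ν ≤ inducedMean s x (cdf ν ∘ x) := by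
  have hsum : ∑ i, sortedVec (cdf ν ∘ x) i * orderGap s x i
      = ∫ t, ∑ i, (Iic (sortedVec x i)).indicator (fun _ => orderGap s x i) t ∂ν := by
    rw [integral_finsetSum _ fun i _ => (integrable_const _).indicator measurableSet_Iic]
    simp [integral_indicator_const _ measurableSet_Iic,
      sortedVec_comp_of_monotone (monotone_cdf ν), cdf_eq_real]
  have hint_sub : ∫ t, (s - t) ∂ν = s - ∫ t, t ∂ν := by
    simpa using integral_sub (integrable_const s) hint
  rw [inducedMean_eq_sub_sum, hsum, le_sub_comm, ← hint_sub]
  exact integral_mono_ae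
    (integrable_finsetSum _ fun i _ => (integrable_const _).indicator measurableSet_Iic)
    ((integrable_const s).sub hint) (hνs.mono fun t ht => sum_indicator_orderGap_le hx ht)

end InducedMean

section Quantile

instance : IsProbabilityMeasure unif01 :=
  ⟨by simp [unif01, Real.volume_Icc]⟩

lemma unif01_eq_restrict_Ioo : unif01 = volume.restrict (Ioo 0 1) :=
  (Measure.restrict_congr_set Ioo_ae_eq_Icc).symm

variable {ν : Measure ℝ}

noncomputable def quantile (ν : Measure ℝ) (p : ℝ) : ℝ :=
  if p ∈ Ioo 0 1 then sInf {t | p ≤ cdf ν t} else 0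

lemma quantile_le_iff {p : ℝ} (hp : p ∈ Ioo 0 1) (a : ℝ) :
    quantile ν p ≤ a ↔ p ≤ cdf ν a := by
  set S := {t | p ≤ cdf ν t}
  have hne : S.Nonempty := ((tendsto_cdf_atTop ν).eventually (lt_mem_nhds hp.2)).exists.imp
    fun _ h => h.le
  have hbdd : BddBelow S := by
    obtain ⟨b, hb⟩ :=
      Filter.eventually_atBot.mp ((tendsto_cdf_atBot ν).eventually (gt_mem_nhds hp.1))
    exact ⟨b, fun t ht => le_of_not_ge fun htb => (hb t htb).not_ge ht⟩
  have hmem : p ≤ cdf ν (sInf S) := by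
    refine ge_of_tendsto (((cdf ν).right_continuous _).mono Ioi_subset_Ici_self)
      (eventually_nhdsWithin_of_forall fun t ht => ?_)
    obtain ⟨t', ht'S, ht't⟩ := exists_lt_of_csInf_lt hne ht
    exact ht'S.trans (monotone_cdf ν ht't.le)
  rw [quantile, if_pos hp]
  exact ⟨fun h => hmem.trans (monotone_cdf ν h), fun h => csInf_le hbdd h⟩

lemma le_cdf_quantile {p : ℝ} (hp : p ∈ Ioo 0 1) : p ≤ cdf ν (quantile ν p) :=
  (quantile_le_iff hp _).mp le_rfl

lemma quantile_preimage_Iic (a : ℝ) :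
    quantile ν ⁻¹' Iic a = Ioo 0 1 ∩ Iic (cdf ν a) ∪ (Ioo 0 1)ᶜ ∩ {_p | 0 ≤ a} := by
  ext p
  by_cases hp : p ∈ Ioo 0 1
  · simp [hp, quantile_le_iff hp]
  · simp [hp, quantile]

lemma measurable_quantile : Measurable (quantile ν) :=
  measurable_of_Iic fun a => by
    rw [quantile_preimage_Iic]
    exact (measurableSet_Ioo.inter measurableSet_Iic).union
      (measurableSet_Ioo.compl.inter (MeasurableSet.const _))

lemma measurePreserving_quantile [IsProbabilityMeasure ν] :
    MeasurePreserving (quantile ν) unif01 ν := by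
  refine ⟨measurable_quantile, Measure.ext_of_Iic _ _ fun a => ?_⟩
  have hpre : quantile ν ⁻¹' Iic a ∩ Ioo 0 1 = Iic (cdf ν a) ∩ Ioo 0 1 := by
    rw [quantile_preimage_Iic]
    ext p
    by_cases hp : p ∈ Ioo 0 1 <;> simp [hp]
  rw [Measure.map_apply measurable_quantile measurableSet_Iic, unif01_eq_restrict_Ioo,
    Measure.restrict_apply (measurable_quantile measurableSet_Iic), hpre, ← ofReal_cdf]
  refine le_antisymm ?_ ?_
  · calc volume (Iic (cdf ν a) ∩ Ioo 0 1) ≤ volume (Ioc 0 (cdf ν a)) :=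
          measure_mono fun p hp => ⟨hp.2.1, hp.1⟩
      _ = ENNReal.ofReal (cdf ν a) := by simp
  · calc ENNReal.ofReal (cdf ν a) = volume (Ioo 0 (cdf ν a)) := by simp
      _ ≤ volume (Iic (cdf ν a) ∩ Ioo 0 1) :=
          measure_mono fun p hp => ⟨hp.2.le, hp.1, hp.2.trans_le (cdf_le_one ν a)⟩

end Quantile

section UpperBound

variable {n : ℕ} {D : Set ℝ} {T : (Fin n → ℝ) → ℝ} {x u v : Fin n → ℝ}

lemma bddAbove_inducedMean_image (hbdd : BddAbove D) (hu : 0 ≤ u) :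
    BddAbove ((fun z => inducedMean (sSup D) z u) '' SsetD D T x) := by
  refine ⟨sSup D, ?_⟩
  rintro _ ⟨z, hz, rfl⟩
  exact inducedMean_le (fun i => le_csSup hbdd (hz.1 i)) hu

lemma inducedMean_le_bfun (hbdd : BddAbove D) (hu : 0 ≤ u) {z : Fin n → ℝ}
    (hz : z ∈ SsetD D T x) : inducedMean (sSup D) z u ≤ bfun D T x u :=
  le_csSup (bddAbove_inducedMean_image hbdd hu) (mem_image_of_mem _ hz)

lemma lt_bfun_iff (hbdd : BddAbove D) (hx : ∀ i, x i ∈ D) (hu : 0 ≤ u) {c : ℝ} :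
    c < bfun D T x u ↔ ∃ z ∈ SsetD D T x, c < inducedMean (sSup D) z u := by
  rw [bfun, lt_csSup_iff (bddAbove_inducedMean_image hbdd hu)
    ⟨_, mem_image_of_mem _ ⟨hx, le_rfl⟩⟩, exists_mem_image]

lemma bfun_le_bfun_of_le (hbdd : BddAbove D) (hx : ∀ i, x i ∈ D) (hu : 0 ≤ u) (huv : u ≤ v) :
    bfun D T x v ≤ bfun D T x u :=
  csSup_le ⟨_, mem_image_of_mem _ ⟨hx, le_rfl⟩⟩ <| forall_mem_image.mpr fun _ hz =>
    (inducedMean_antitone (fun i => le_csSup hbdd (hz.1 i)) huv).trans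
      (inducedMean_le_bfun hbdd hu hz)

lemma measurableSet_Ici_inter_le_bfun (hbdd : BddAbove D) (hx : ∀ i, x i ∈ D) (c : ℝ) :
    MeasurableSet (Ici 0 ∩ {u | c ≤ bfun D T x u}) := by
  -- `bfun` is a supremum of continuous functions, so `{c ≤ bfun}` is a `G_δ` on the orthant
  have heq : Ici 0 ∩ {u | c ≤ bfun D T x u} = Ici 0 ∩ ⋂ (q : ℚ) (_ : (q : ℝ) < c),
      ⋃ z ∈ SsetD D T x, {u | (q : ℝ) < inducedMean (sSup D) z u} := by
    ext u
    simp only [mem_inter_iff, mem_Ici, mem_ofPred_eq, mem_iInter, mem_iUnion, exists_prop,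
      and_congr_right_iff]
    intro hu
    simp only [← lt_bfun_iff hbdd hx hu]
    exact ⟨fun h q hq => hq.trans_le h,
      fun h => le_of_forall_rat_lt_imp_le fun q hq => (h q hq).le⟩
  rw [heq]
  exact isClosed_Ici.measurableSet.inter <| MeasurableSet.iInter fun q => MeasurableSet.iInter
    fun _ => (isOpen_biUnion fun z _ => isOpen_lt continuous_const
      (continuous_inducedMean _ z)).measurableSet

end UpperBound

theorem stmt4_general {n : ℕ} (D : Set ℝ) (hbdd : BddAbove D)
    (ν : Measure ℝ) [IsProbabilityMeasure ν] (hsupp : ∀ᵐ t ∂ν, t ∈ D)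
    (hint : Integrable id ν) (μmean : ℝ) (hmean : μmean = ∫ t, t ∂ν)
    (T : (Fin n → ℝ) → ℝ) (x : Fin n → ℝ) (hx : ∀ i, x i ∈ D) :
    (Measure.pi fun _ : Fin n => ν) {z | T z ≤ T x}
      ≤ unifPi n {u | μmean ≤ bfun D T x u} := by
  set Φ : (Fin n → ℝ) → Fin n → ℝ := fun u i => quantile ν (u i)
  set Ψ : (Fin n → ℝ) → Fin n → ℝ := fun z i => cdf ν (z i)
  set E := Ici 0 ∩ {v | μmean ≤ bfun D T x v}
  have hΦ : MeasurePreserving Φ (unifPi n) (Measure.pi fun _ => ν) :=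
    measurePreserving_pi _ _ fun _ => measurePreserving_quantile
  have hΨ : Measurable Ψ :=
    measurable_pi_lambda _ fun i => (monotone_cdf ν).measurable.comp (measurable_pi_apply i)
  calc (Measure.pi fun _ => ν) {z | T z ≤ T x} ≤ (Measure.pi fun _ => ν) (Ψ ⁻¹' E) := by
        refine measure_mono_ae ?_
        filter_upwards [Measure.ae_pi_le_pi (Filter.eventually_pi fun _ => hsupp)] with z hzD hz
        have hmean_le := integral_le_inducedMean_cdf ν hint
          (hsupp.mono fun t ht => le_csSup hbdd ht) (fun i => le_csSup hbdd (hzD i))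
        exact ⟨fun i => cdf_nonneg ν _,
          hmean ▸ hmean_le.trans (inducedMean_le_bfun hbdd (fun i => cdf_nonneg ν _) ⟨hzD, hz⟩)⟩
    _ = unifPi n (Φ ⁻¹' (Ψ ⁻¹' E)) := (hΦ.measure_preimage
          (hΨ (measurableSet_Ici_inter_le_bfun hbdd hx μmean)).nullMeasurableSet).symm
    _ ≤ unifPi n {u | μmean ≤ bfun D T x u} := by
        refine measure_mono_ae ?_
        have hIoo : ∀ᵐ p ∂unif01, p ∈ Ioo 0 1 := by
          rw [unif01_eq_restrict_Ioo]; exact ae_restrict_mem measurableSet_Ioo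
        filter_upwards [Measure.ae_pi_le_pi (Filter.eventually_pi fun _ => hIoo)] with u hu huE
        exact huE.2.trans
          (bfun_le_bfun_of_le hbdd hx (fun i => (hu i).1.le) fun i => le_cdf_quantile (hu i))

/-- `P(T(Z) ≤ T(x)) ≤ P(b_{D,T}(x,U) ≥ μ)` for `Z` an i.i.d. sample
from a distribution `ν` supported on `D` with mean `μ`, and `U` i.i.d. Uniform(0,1). -/
theorem stmt4 {n : ℕ} (D : Set ℝ) (hD : D.Nonempty) (hbdd : BddAbove D)
    (ν : Measure ℝ) [IsProbabilityMeasure ν] (hsupp : ∀ᵐ t ∂ν, t ∈ D)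
    (hint : Integrable id ν) (μmean : ℝ) (hmean : μmean = ∫ t, t ∂ν)
    (T : (Fin n → ℝ) → ℝ) (x : Fin n → ℝ) (hx : ∀ i, x i ∈ D) :
    (Measure.pi fun _ : Fin n => ν) {z | T z ≤ T x}
      ≤ unifPi n {u | μmean ≤ bfun D T x u} :=
  stmt4_general D hbdd ν hsupp hint μmean hmean T x hx
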